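/- arXiv:2106.08896 — 2 statements merged into one kernel-verified Lean document; each statement's English description precedes it below -/
import Mathlib

section
/- Let C and D be braided monoidal categories and F : C ⥤ D a braided strong monoidal functor, with invertible unit coherence ε : 𝟙_D ≅ F(𝟙_C). If u : U ⟶ 𝟙_C is a central idempotent in C, then F(u) ≫ ε⁻¹ : F(U) ⟶ 𝟙_D is a central idempotent in D. Moreover the induced map on central idempotents is a morphism of meet-semilattices: it is monotone for ≤, sends the top central idempotent 𝟙 to (an idempotent isomorphic to) the top, and sends the meet u ∧ v (given by (u ⊗ v) ≫ λ) to the meet of the images. -/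
open CategoryTheory MonoidalCategory Functor.LaxMonoidal Functor.OplaxMonoidal

/-- A central idempotent in a braided monoidal category: a morphism `u : U ⟶ 𝟙` with
`λ_U ∘ (u ⊗ 𝟙_U) = ρ_U ∘ (𝟙_U ⊗ u)` invertible (the half-braiding is the braiding). -/
structure IsCentralIdempotent {C : Type*} [Category C] [MonoidalCategory C]
    [BraidedCategory C] {U : C} (u : U ⟶ 𝟙_ C) : Prop where
  central : (u ▷ U) ≫ (λ_ U).hom = (U ◁ u) ≫ (ρ_ U).hom
  isIso : IsIso ((u ▷ U) ≫ (λ_ U).hom)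

/-- `u ≤ v` for central idempotents in a braided category. -/
def CentralIdempotentLE {C : Type*} [Category C] [MonoidalCategory C] [BraidedCategory C]
    {U V : C} (_u : U ⟶ 𝟙_ C) (v : V ⟶ 𝟙_ C) : Prop :=
  IsIso (U ◁ v)

section Aux

variable {C D : Type*} [Category C] [MonoidalCategory C]
    [Category D] [MonoidalCategory D] (F : C ⥤ D) [F.Monoidal]

lemma aux_eta_whisker (X : C) :
    η F ▷ F.obj X ≫ (λ_ (F.obj X)).hom = μ F (𝟙_ C) X ≫ F.map (λ_ X).hom := by
  rw [← left_unitality_hom F X, ← Category.assoc, ← Category.assoc,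
    Functor.Monoidal.μ_δ, Category.id_comp]

lemma aux_whisker_eta (X : C) :
    F.obj X ◁ η F ≫ (ρ_ (F.obj X)).hom = μ F X (𝟙_ C) ≫ F.map (ρ_ X).hom := by
  rw [← right_unitality_hom F X, ← Category.assoc, ← Category.assoc,
    Functor.Monoidal.μ_δ, Category.id_comp]

end Aux

/-- A braided strong monoidal functor `F : C ⥤ D` sends central idempotents to central
idempotents via `u ↦ F(u) ≫ ε⁻¹`, and the induced map on central idempotents is a morphism
of meet-semilattices: monotone, preserving the top element up to isomorphism, and
preserving binary meets. -/
theorem stmt8 {C D : Type*} [Category C] [MonoidalCategory C] [BraidedCategory C]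
    [Category D] [MonoidalCategory D] [BraidedCategory D]
    (F : C ⥤ D) [F.Braided] :
    -- sends central idempotents to central idempotents
    (∀ {U : C} (u : U ⟶ 𝟙_ C), IsCentralIdempotent u →
      IsCentralIdempotent (F.map u ≫ η F)) ∧
    -- monotone
    (∀ {U V : C} (u : U ⟶ 𝟙_ C) (v : V ⟶ 𝟙_ C),
      IsCentralIdempotent u → IsCentralIdempotent v → CentralIdempotentLE u v →
      CentralIdempotentLE (F.map u ≫ η F) (F.map v ≫ η F)) ∧
    -- the image of the top element is (isomorphic to) the top element
    CentralIdempotentLE (𝟙 (𝟙_ D)) (F.map (𝟙 (𝟙_ C)) ≫ η F) ∧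
    -- preserves binary meets: the meet of the images equals the image of the meet,
    -- identified along the coherence isomorphism `μ`
    (∀ {U V : C} (u : U ⟶ 𝟙_ C) (v : V ⟶ 𝟙_ C),
      IsCentralIdempotent u → IsCentralIdempotent v →
      ((F.map u ≫ η F) ⊗ₘ (F.map v ≫ η F)) ≫ (λ_ (𝟙_ D)).hom =
        μ F U V ≫ F.map ((u ⊗ₘ v) ≫ (λ_ (𝟙_ C)).hom) ≫ η F) := by
  refine ⟨?_, ?_, ?_, ?_⟩
  · intro U u hu
    have key : ((F.map u ≫ η F) ▷ F.obj U) ≫ (λ_ (F.obj U)).hom =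
        μ F U U ≫ F.map ((u ▷ U) ≫ (λ_ U).hom) := by
      rw [comp_whiskerRight, Category.assoc, aux_eta_whisker,
        μ_natural_left_assoc, ← F.map_comp]
    have key2 : (F.obj U ◁ (F.map u ≫ η F)) ≫ (ρ_ (F.obj U)).hom =
        μ F U U ≫ F.map ((U ◁ u) ≫ (ρ_ U).hom) := by
      rw [MonoidalCategory.whiskerLeft_comp, Category.assoc, aux_whisker_eta,
        μ_natural_right_assoc, ← F.map_comp]
    constructor
    · rw [key, key2, hu.central]
    · rw [key]
      have := hu.isIso
      infer_instance
  · intro U V u v _ _ h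
    have h' : IsIso (U ◁ v) := h
    have e : F.obj U ◁ (F.map v ≫ η F) =
        (μ F U V ≫ F.map (U ◁ v) ≫ δ F U (𝟙_ C)) ≫ F.obj U ◁ η F := by
      rw [MonoidalCategory.whiskerLeft_comp, ← μ_natural_right_assoc,
        Category.assoc, Category.assoc, Functor.Monoidal.μ_δ_assoc]
    show IsIso _
    rw [e]
    infer_instance
  · show IsIso _
    simp only [F.map_id, Category.id_comp]
    infer_instance
  · intro U V u v _ _
    calc ((F.map u ≫ η F) ⊗ₘ (F.map v ≫ η F)) ≫ (λ_ (𝟙_ D)).hom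
        = (F.map u ⊗ₘ F.map v) ≫ (F.obj (𝟙_ C) ◁ η F) ≫ (η F ▷ 𝟙_ D) ≫ (λ_ (𝟙_ D)).hom := by
          rw [← tensorHom_comp_tensorHom, tensorHom_def' (η F) (η F)]
          simp only [Category.assoc]
      _ = (F.map u ⊗ₘ F.map v) ≫ (F.obj (𝟙_ C) ◁ η F) ≫ (ρ_ (F.obj (𝟙_ C))).hom ≫ η F := by
          simp [MonoidalCategory.whiskerRight_id, unitors_equal]
      _ = (F.map u ⊗ₘ F.map v) ≫ μ F (𝟙_ C) (𝟙_ C) ≫ F.map (ρ_ (𝟙_ C)).hom ≫ η F := by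
          rw [← Category.assoc (F.obj (𝟙_ C) ◁ η F), aux_whisker_eta, Category.assoc]
      _ = μ F U V ≫ F.map ((u ⊗ₘ v) ≫ (λ_ (𝟙_ C)).hom) ≫ η F := by
          rw [μ_natural_assoc, ← unitors_equal, F.map_comp, Category.assoc]
end

section
/- Let C be a braided monoidal category that is bilinear: for every central idempotent u : U ⟶ 𝟙 and all morphisms f, g : A ⟶ B ⊗ U, the equality f ⊗ 𝟙_U = g ⊗ 𝟙_U implies f = g. Then every central idempotent u : U ⟶ 𝟙 of C is a monomorphism (so the subunits of C coincide with its central idempotents). -/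
open CategoryTheory MonoidalCategory

/-- In a bilinear braided monoidal category (for every central idempotent `u : U ⟶ 𝟙` and
all `f, g : A ⟶ B ⊗ U`, `f ⊗ 𝟙_U = g ⊗ 𝟙_U` implies `f = g`), every central idempotent is
a monomorphism; hence the subunits coincide with the central idempotents. -/
theorem stmt15 {C : Type*} [Category C] [MonoidalCategory C] [BraidedCategory C]
    (bilinear : ∀ {U : C} (u : U ⟶ 𝟙_ C), IsCentralIdempotent u →
      ∀ {A B : C} (f g : A ⟶ B ⊗ U), f ▷ U = g ▷ U → f = g)
    {U : C} (u : U ⟶ 𝟙_ C) (hu : IsCentralIdempotent u) : Mono u := by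
  constructor
  intro A f g h
  haveI := hu.isIso
  have h1 : f ▷ U = g ▷ U := by
    have h2 : f ▷ U ≫ ((u ▷ U) ≫ (λ_ U).hom) = g ▷ U ≫ ((u ▷ U) ≫ (λ_ U).hom) := by
      rw [← Category.assoc, ← Category.assoc, ← comp_whiskerRight, ← comp_whiskerRight, h]
    exact (cancel_mono _).mp h2
  have h3 := bilinear u hu (f ≫ (λ_ U).inv) (g ≫ (λ_ U).inv) (by
    rw [comp_whiskerRight, comp_whiskerRight, h1])
  simpa using h3
end
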